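/- arXiv:1603.06315 — 3 statements merged into one kernel-verified Lean document; each statement's English description precedes it below -/
import Mathlib

section
/- Quantitative implicit function theorem (Lemma 6.1 of the paper): Let E and F be real Banach spaces and let Φ : E → F be a map written as Φ(x) = Φ(0) + L(x) + N(x), where L : E → F is a continuous linear isomorphism and N : E → F (so N(0) = 0). Assume there are constants r > 0, C > 0 and q > 0 such that (i) ‖L⁻¹(y)‖ ≤ C‖y‖ for all y ∈ F; (ii) ‖N(x) − N(y)‖ ≤ q · ‖x + y‖ · ‖x − y‖ for all x, y in the open ball of radius r centred at 0 in E; and (iii) ‖Φ(0)‖ < min{ r/(2C), 1/(4qC²) }. Then there exists a unique x ∈ E with ‖x‖ ≤ 2C‖Φ(0)‖ such that Φ(x) = 0. -/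
/-- Quantitative implicit function theorem (Lemma 6.1): if `Φ = Φ(0) + L + N` with `L`
a continuous linear isomorphism whose inverse is bounded by `C`, the nonlinearity `N`
satisfies a quadratic estimate on the ball of radius `r`, and `‖Φ(0)‖` is small enough,
then `Φ` has a unique zero `x` with `‖x‖ ≤ 2C‖Φ(0)‖`. -/
theorem quantitative_implicit_function_theorem
    {E F : Type*} [NormedAddCommGroup E] [NormedSpace ℝ E] [CompleteSpace E]
    [NormedAddCommGroup F] [NormedSpace ℝ F] [CompleteSpace F]
    (Φ : E → F) (L : E ≃L[ℝ] F) (N : E → F)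
    (hΦ : ∀ x : E, Φ x = Φ 0 + L x + N x)
    (r C q : ℝ) (hr : 0 < r) (hC : 0 < C) (hq : 0 < q)
    (hL : ∀ y : F, ‖L.symm y‖ ≤ C * ‖y‖)
    (hN : ∀ x ∈ Metric.ball (0 : E) r, ∀ y ∈ Metric.ball (0 : E) r,
      ‖N x - N y‖ ≤ q * ‖x + y‖ * ‖x - y‖)
    (hΦ0 : ‖Φ 0‖ < min (r / (2 * C)) (1 / (4 * q * C ^ 2))) :
    ∃! x : E, ‖x‖ ≤ 2 * C * ‖Φ 0‖ ∧ Φ x = 0 := by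
  set R : ℝ := 2 * C * ‖Φ 0‖ with hR
  have hΦ0nn : (0:ℝ) ≤ ‖Φ 0‖ := norm_nonneg _
  have hRnn : 0 ≤ R := by positivity
  have hRr : R < r := by
    have h1 : ‖Φ 0‖ < r / (2 * C) := lt_of_lt_of_le hΦ0 (min_le_left _ _)
    have : 2 * C * ‖Φ 0‖ < 2 * C * (r / (2 * C)) := by
      apply mul_lt_mul_of_pos_left h1; positivity
    rwa [mul_div_cancel₀ r (by positivity)] at this
  set k : ℝ := 4 * q * C ^ 2 * ‖Φ 0‖ with hk
  have hknn : 0 ≤ k := by positivity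
  have hk1 : k < 1 := by
    have h2 : ‖Φ 0‖ < 1 / (4 * q * C ^ 2) := lt_of_lt_of_le hΦ0 (min_le_right _ _)
    have : 4 * q * C ^ 2 * ‖Φ 0‖ < 4 * q * C ^ 2 * (1 / (4 * q * C ^ 2)) := by
      apply mul_lt_mul_of_pos_left h2; positivity
    rwa [mul_one_div, div_self (by positivity)] at this
  -- N 0 = 0
  have hN0 : N 0 = 0 := by
    have := hΦ 0
    simp only [map_zero, add_zero, zero_add] at this
    exact (left_eq_add.mp this)
  -- the fixed point map
  set T : E → E := fun x => -(L.symm (Φ 0 + N x)) with hT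
  have hfix : ∀ x : E, Φ x = 0 ↔ T x = x := by
    intro x
    rw [hΦ x, hT]
    constructor
    · intro h
      have h2 : L x = -(Φ 0 + N x) := eq_neg_of_add_eq_zero_left (by rw [← h]; abel)
      have := congrArg L.symm h2
      simpa [map_neg] using this.symm
    · intro h
      have h2 := congrArg L h
      simp only [map_neg, L.apply_symm_apply] at h2
      rw [← h2]; abel
  set s : Set E := Metric.closedBall (0 : E) R with hs
  have hball : ∀ x ∈ s, x ∈ Metric.ball (0 : E) r := by
    intro x hx
    simp only [hs, Metric.mem_closedBall, dist_zero_right] at hx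
    simp only [Metric.mem_ball, dist_zero_right]
    exact lt_of_le_of_lt hx hRr
  -- estimate on N
  have hNx : ∀ x ∈ s, ‖N x‖ ≤ q * ‖x‖ ^ 2 := by
    intro x hx
    have := hN x (hball x hx) 0 (by simpa [Metric.mem_ball] using hr)
    simpa [hN0, sq, mul_assoc] using this
  have hxnorm : ∀ x ∈ s, ‖x‖ ≤ R := by
    intro x hx
    simpa [hs, Metric.mem_closedBall, dist_zero_right] using hx
  -- T maps s to s
  have hmaps : Set.MapsTo T s s := by
    intro x hx
    have h1 : ‖T x‖ ≤ C * (‖Φ 0‖ + ‖N x‖) := by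
      calc ‖T x‖ = ‖L.symm (Φ 0 + N x)‖ := norm_neg _
        _ ≤ C * ‖Φ 0 + N x‖ := hL _
        _ ≤ C * (‖Φ 0‖ + ‖N x‖) := by
            apply mul_le_mul_of_nonneg_left (norm_add_le _ _) hC.le
    have h2 : ‖N x‖ ≤ q * R ^ 2 := by
      refine (hNx x hx).trans ?_
      apply mul_le_mul_of_nonneg_left _ hq.le
      exact pow_le_pow_left₀ (norm_nonneg _) (hxnorm x hx) 2
    have h3 : q * R ^ 2 ≤ ‖Φ 0‖ := by
      have : q * R ^ 2 = k * ‖Φ 0‖ := by ring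
      rw [this]
      calc k * ‖Φ 0‖ ≤ 1 * ‖Φ 0‖ := mul_le_mul_of_nonneg_right hk1.le hΦ0nn
        _ = ‖Φ 0‖ := one_mul _
    have : ‖T x‖ ≤ R := by
      calc ‖T x‖ ≤ C * (‖Φ 0‖ + ‖N x‖) := h1
        _ ≤ C * (‖Φ 0‖ + ‖Φ 0‖) := by
            apply mul_le_mul_of_nonneg_left _ hC.le
            linarith [h2.trans h3]
        _ = R := by ring
    simpa [hs, Metric.mem_closedBall, dist_zero_right] using this
  -- contraction estimate
  have hcontr : ∀ x ∈ s, ∀ y ∈ s, ‖T x - T y‖ ≤ k * ‖x - y‖ := by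
    intro x hx y hy
    have h1 : T x - T y = L.symm (N y - N x) := by
      simp only [hT, map_add, map_sub]
      abel
    calc ‖T x - T y‖ = ‖L.symm (N y - N x)‖ := by rw [h1]
      _ ≤ C * ‖N y - N x‖ := hL _
      _ ≤ C * (q * ‖y + x‖ * ‖y - x‖) := by
          apply mul_le_mul_of_nonneg_left (hN y (hball y hy) x (hball x hx)) hC.le
      _ ≤ C * (q * (2 * R) * ‖y - x‖) := by
          apply mul_le_mul_of_nonneg_left _ hC.le
          apply mul_le_mul_of_nonneg_right _ (norm_nonneg _)
          apply mul_le_mul_of_nonneg_left _ hq.le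
          calc ‖y + x‖ ≤ ‖y‖ + ‖x‖ := norm_add_le _ _
            _ ≤ R + R := add_le_add (hxnorm y hy) (hxnorm x hx)
            _ = 2 * R := by ring
      _ = k * ‖y - x‖ := by rw [hk, hR]; ring
      _ = k * ‖x - y‖ := by rw [norm_sub_rev]
  -- existence via Banach fixed point on the complete set s
  have hsc : IsComplete s := Metric.isClosed_closedBall.isComplete
  have hlip : ContractingWith k.toNNReal (hmaps.restrict T s s) := by
    constructor
    · exact_mod_cast Real.toNNReal_lt_one.2 hk1
    · apply LipschitzWith.of_dist_le_mul
      rintro ⟨x, hx⟩ ⟨y, hy⟩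
      simp only [Set.MapsTo.restrict, Subtype.dist_eq, dist_eq_norm, Subtype.map]
      calc ‖T x - T y‖ ≤ k * ‖x - y‖ := hcontr x hx y hy
        _ = (k.toNNReal : ℝ) * ‖x - y‖ := by rw [Real.coe_toNNReal k hknn]
  have h0s : (0 : E) ∈ s := by simp [hs, hRnn]
  obtain ⟨x, hxs, hxfix, -, -⟩ :=
    hlip.exists_fixedPoint' hsc hmaps h0s (edist_ne_top _ _)
  refine ⟨x, ⟨hxnorm x hxs, (hfix x).2 hxfix⟩, ?_⟩
  rintro y ⟨hyR, hyΦ⟩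
  have hys : y ∈ s := by simpa [hs, Metric.mem_closedBall, dist_zero_right] using hyR
  have hyfix : T y = y := (hfix y).1 hyΦ
  have : ‖y - x‖ ≤ k * ‖y - x‖ := by
    calc ‖y - x‖ = ‖T y - T x‖ := by rw [hyfix, hxfix]
      _ ≤ k * ‖y - x‖ := hcontr y hys x hxs
  have hzero : ‖y - x‖ = 0 := by nlinarith [norm_nonneg (y - x)]
  exact sub_eq_zero.1 (norm_eq_zero.1 hzero)
end

section
/- Local solvability defining the map 𝓕 of Section 2 of the paper: There exist constants σ > 0, r > 0 and r' > 0 with the following property. For every symmetric 3 × 3 real matrix Q with ‖Q − 1‖ ≤ σ and every symmetric 3 × 3 real matrix S with ‖S‖ ≤ r, there exists a unique symmetric 3 × 3 real matrix A with ‖A‖ ≤ r' such that Q·A + A·Q + A·Q·A = S. -/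
open Matrix

attribute [local instance] Matrix.normedAddCommGroup

/-!
Writing `Q = 1 + (Q - 1)`, the equation `Q A + A Q + A Q A = S` reads `A = Φ(A)` with
`Φ(A) = ½ (S - (Q - 1) A - A (Q - 1) - A Q A)`. For `Q` close to `1` and `A` small, `Φ` is
a contraction, with Lipschitz constant `L = O(‖Q - 1‖ + ‖A‖)`. Since `Φ(0) = S / 2`, it maps the
closed set of symmetric matrices of norm `≤ ρ` into itself as soon as `‖S‖ / 2 + L ρ ≤ ρ`, and the
Banach fixed-point theorem gives existence and uniqueness of the solution there.
-/

open Function Set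
open scoped NNReal

attribute [local instance] Matrix.normedSpace

theorem existsUnique_isFixedPt_of_mapsTo {α : Type*} [MetricSpace α] {f : α → α} {s : Set α}
    {K : ℝ≥0} (hsc : IsComplete s) (hs : s.Nonempty) (hsf : MapsTo f s s) (hK : K < 1)
    (hf : LipschitzOnWith K f s) :
    ∃! x, x ∈ s ∧ IsFixedPt f x := by
  have hc : ContractingWith K (hsf.restrict f s s) :=
    ⟨hK, (hsf.lipschitzOnWith_iff_restrict).1 hf⟩
  obtain ⟨x, hxs⟩ := hs
  obtain ⟨y, hys, hy, -⟩ := hc.exists_fixedPoint' hsc hsf hxs (edist_ne_top _ _)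
  refine ⟨y, ⟨hys, hy⟩, fun z ⟨hzs, hz⟩ => ?_⟩
  have := hc.fixedPoint_unique' (x := ⟨z, hzs⟩) (y := ⟨y, hys⟩) (Subtype.ext hz) (Subtype.ext hy)
  exact congrArg Subtype.val this

namespace Matrix

section Norm

variable {l m n α : Type*} [Fintype l] [Fintype m] [Fintype n]

theorem norm_mul_le_card_mul [NonUnitalNormedRing α] (A : Matrix l m α) (B : Matrix m n α) :
    ‖A * B‖ ≤ Fintype.card m * ‖A‖ * ‖B‖ := by
  rw [norm_le_iff (by positivity)]
  intro i j
  calc ‖∑ k, A i k * B k j‖ ≤ ∑ k, ‖A i k‖ * ‖B k j‖ :=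
        norm_sum_le_of_le _ fun k _ => norm_mul_le _ _
    _ ≤ ∑ _k : m, ‖A‖ * ‖B‖ := by
        gcongr <;> exact norm_entry_le_entrywise_sup_norm _
    _ = Fintype.card m * ‖A‖ * ‖B‖ := by simp [mul_assoc]

theorem norm_one_le [DecidableEq n] [NormedRing α] [NormOneClass α] :
    ‖(1 : Matrix n n α)‖ ≤ 1 := by
  rw [← diagonal_one, norm_diagonal]
  exact pi_norm_le_iff_of_nonneg zero_le_one |>.2 fun _ => norm_one.le

end Norm

variable {n : Type*} [Fintype n] [DecidableEq n]

noncomputable def picardMap (Q S A : Matrix n n ℝ) : Matrix n n ℝ :=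
  (1 / 2 : ℝ) • (S - (Q - 1) * A - A * (Q - 1) - A * Q * A)

theorem picardMap_eq_self_iff {Q S A : Matrix n n ℝ} :
    picardMap Q S A = A ↔ Q * A + A * Q + A * Q * A = S := by
  have key : picardMap Q S A - A = (1 / 2 : ℝ) • (S - (Q * A + A * Q + A * Q * A)) := by
    simp only [picardMap, mul_sub, sub_mul, one_mul, mul_one]
    module
  rw [← sub_eq_zero, key, smul_eq_zero, sub_eq_zero, eq_comm (a := S)]
  norm_num

theorem picardMap_zero (Q S : Matrix n n ℝ) : picardMap Q S 0 = (1 / 2 : ℝ) • S := by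
  simp [picardMap]

theorem IsSymm.picardMap {Q S A : Matrix n n ℝ} (hQ : Q.IsSymm) (hS : S.IsSymm)
    (hA : A.IsSymm) : (picardMap Q S A).IsSymm := by
  simp only [IsSymm, Matrix.picardMap, transpose_smul, transpose_sub, transpose_mul,
    transpose_one, hQ.eq, hS.eq, hA.eq, ← Matrix.mul_assoc]
  rw [sub_right_comm S]

theorem picardMap_sub_picardMap (Q S A B : Matrix n n ℝ) :
    picardMap Q S A - picardMap Q S B = (1 / 2 : ℝ) •
      ((Q - 1) * (B - A) + (B - A) * (Q - 1) + (B - A) * Q * B + A * Q * (B - A)) := by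
  simp only [picardMap, mul_sub, sub_mul, one_mul, mul_one]
  module

theorem norm_picardMap_sub_le {Q S A B : Matrix n n ℝ} {σ ρ : ℝ} (hQ : ‖Q - 1‖ ≤ σ)
    (hA : ‖A‖ ≤ ρ) (hB : ‖B‖ ≤ ρ) :
    ‖picardMap Q S A - picardMap Q S B‖ ≤
      (Fintype.card n * σ + Fintype.card n ^ 2 * (1 + σ) * ρ) * ‖A - B‖ := by
  set c : ℝ := (Fintype.card n : ℝ)
  have hQnorm : ‖Q‖ ≤ 1 + σ := calc
    ‖Q‖ = ‖1 + (Q - 1)‖ := by rw [add_sub_cancel]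
    _ ≤ 1 + σ := (norm_add_le _ _).trans (add_le_add norm_one_le hQ)
  have hmul (X Y : Matrix n n ℝ) : ‖X * Y‖ ≤ c * ‖X‖ * ‖Y‖ := norm_mul_le_card_mul X Y
  have hmul₃ (X Y Z : Matrix n n ℝ) : ‖X * Y * Z‖ ≤ c ^ 2 * ‖X‖ * ‖Y‖ * ‖Z‖ := calc
    ‖X * Y * Z‖ ≤ c * (c * ‖X‖ * ‖Y‖) * ‖Z‖ := (hmul _ _).trans (by gcongr; exact hmul X Y)
    _ = c ^ 2 * ‖X‖ * ‖Y‖ * ‖Z‖ := by ring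
  rw [picardMap_sub_picardMap, norm_smul, ← norm_neg (A - B), neg_sub]
  set D := B - A
  have hσ : 0 ≤ σ := (norm_nonneg _).trans hQ
  have hρ : 0 ≤ ρ := (norm_nonneg _).trans hA
  calc ‖(1 / 2 : ℝ)‖ * ‖(Q - 1) * D + D * (Q - 1) + D * Q * B + A * Q * D‖
      ≤ 1 / 2 * (c * ‖Q - 1‖ * ‖D‖ + c * ‖D‖ * ‖Q - 1‖ + c ^ 2 * ‖D‖ * ‖Q‖ * ‖B‖
          + c ^ 2 * ‖A‖ * ‖Q‖ * ‖D‖) := by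
        rw [Real.norm_of_nonneg (by norm_num)]
        gcongr
        refine norm_add₄_le.trans ?_
        gcongr
        exacts [hmul _ _, hmul _ _, hmul₃ _ _ _, hmul₃ _ _ _]
    _ ≤ 1 / 2 * (c * σ * ‖D‖ + c * ‖D‖ * σ + c ^ 2 * ‖D‖ * (1 + σ) * ρ
          + c ^ 2 * ρ * (1 + σ) * ‖D‖) := by gcongr
    _ = (c * σ + c ^ 2 * (1 + σ) * ρ) * ‖D‖ := by ring

theorem existsUnique_isSymm_solution {σ r ρ : ℝ} {L : ℝ≥0} (hρ : 0 ≤ ρ)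
    (hL : Fintype.card n * σ + Fintype.card n ^ 2 * (1 + σ) * ρ ≤ L) (hL₁ : L < 1)
    (hr : r / 2 + L * ρ ≤ ρ) {Q S : Matrix n n ℝ} (hQ : Q.IsSymm) (hQσ : ‖Q - 1‖ ≤ σ)
    (hS : S.IsSymm) (hSr : ‖S‖ ≤ r) :
    ∃! A : Matrix n n ℝ, A.IsSymm ∧ ‖A‖ ≤ ρ ∧ Q * A + A * Q + A * Q * A = S := by
  set K := {A : Matrix n n ℝ | A.IsSymm ∧ ‖A‖ ≤ ρ}
  have hK : IsClosed K :=
    (isClosed_eq continuous_id.matrix_transpose continuous_id).inter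
      (isClosed_le continuous_norm continuous_const)
  have h0K : (0 : Matrix n n ℝ) ∈ K := ⟨isSymm_zero, by simpa using hρ⟩
  have hlip : LipschitzOnWith L (picardMap Q S) K := by
    refine LipschitzOnWith.of_dist_le_mul fun A hA B hB => ?_
    rw [dist_eq_norm, dist_eq_norm]
    exact (norm_picardMap_sub_le hQσ hA.2 hB.2).trans (by gcongr)
  have hmaps : MapsTo (picardMap Q S) K K := by
    refine fun A hA => ⟨IsSymm.picardMap hQ hS hA.1, ?_⟩
    have := hlip.dist_le_mul A hA 0 h0K
    rw [dist_eq_norm, dist_eq_norm, sub_zero, picardMap_zero] at this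
    calc ‖picardMap Q S A‖
        ≤ ‖picardMap Q S A - (1 / 2 : ℝ) • S‖ + ‖(1 / 2 : ℝ) • S‖ := norm_le_norm_sub_add _ _
      _ ≤ L * ρ + r / 2 := by
        rw [norm_smul, Real.norm_of_nonneg (by norm_num)]
        gcongr
        exacts [this.trans (by gcongr; exact hA.2), by linarith]
      _ ≤ ρ := by linarith
  obtain ⟨A, ⟨hAK, hA⟩, huniq⟩ :=
    existsUnique_isFixedPt_of_mapsTo hK.isComplete ⟨0, h0K⟩ hmaps hL₁ hlip
  exact ⟨A, ⟨hAK.1, hAK.2, picardMap_eq_self_iff.1 hA⟩,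
    fun B hB => huniq B ⟨⟨hB.1, hB.2.1⟩, picardMap_eq_self_iff.2 hB.2.2⟩⟩

end Matrix

/-- Local solvability defining the map `𝓕` of Section 2: there are `σ, r, r' > 0` such
that for every symmetric `Q` with `‖Q - 1‖ ≤ σ` and every symmetric `S` with `‖S‖ ≤ r`
there is a unique symmetric `A` with `‖A‖ ≤ r'` solving `Q·A + A·Q + A·Q·A = S`. -/
theorem local_solvability_F :
    ∃ σ > (0 : ℝ), ∃ r > (0 : ℝ), ∃ r' > (0 : ℝ),
      ∀ Q S : Matrix (Fin 3) (Fin 3) ℝ,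
        Qᵀ = Q → ‖Q - 1‖ ≤ σ → Sᵀ = S → ‖S‖ ≤ r →
        ∃! A : Matrix (Fin 3) (Fin 3) ℝ,
          Aᵀ = A ∧ ‖A‖ ≤ r' ∧ Q * A + A * Q + A * Q * A = S := by
  refine ⟨1 / 100, by norm_num, 1 / 100, by norm_num, 1 / 100, by norm_num, ?_⟩
  intro Q S hQ hQσ hS hSr
  exact existsUnique_isSymm_solution (L := 1 / 4) (by norm_num) (by norm_num) (by norm_num)
    (by norm_num) hQ hQσ hS hSr
end

section
/- Product estimate in weighted Hölder norms (Lemma 6.2 of the paper): Let (X, d) be a metric space, let c > 0, ε > 0, r₀ > 0, α ∈ (0,1) and δ < 1, and let ρ : X → ℝ be a weight function with ρ(x) ≥ c·ε for all x ∈ X. For a function u : X → ℝ define the weighted Hölder norm ‖u‖_{C^{0,α}_{δ−1}} := sup_{x ∈ X} ρ(x)^{1−δ} |u(x)| + sup_{x ≠ y, d(x,y) < r₀} min{ρ(x), ρ(y)}^{1−δ+α} |u(x) − u(y)| / d(x,y)^α. Then there is a constant C > 0, depending only on c and δ (in particular independent of ε, X, ρ, r₀, α), such that for all u, v : X → ℝ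 whose norms ‖u‖_{C^{0,α}_{δ−1}} and ‖v‖_{C^{0,α}_{δ−1}} are finite, the product satisfies ‖u·v‖_{C^{0,α}_{δ−1}} ≤ C · ε^{δ−1} · ‖u‖_{C^{0,α}_{δ−1}} · ‖v‖_{C^{0,α}_{δ−1}}. -/
open Set

/-- The weight term of the weighted Hölder norm: `x ↦ ρ(x)^{1-δ} |u(x)|`
(note `‖u‖_{C⁰_{δ-1}} = sup ρ^{-(δ-1)}|u|`). -/
noncomputable def weightedSupTerm {X : Type*} [MetricSpace X]
    (ρ : X → ℝ) (δ : ℝ) (u : X → ℝ) : X → ℝ :=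
  fun x => ρ x ^ (1 - δ) * |u x|

/-- The Hölder seminorm term of the weighted Hölder norm, over pairs of distinct points
at distance `< r₀`. -/
noncomputable def weightedHolderTerm {X : Type*} [MetricSpace X]
    (ρ : X → ℝ) (r₀ α δ : ℝ) (u : X → ℝ) :
    {p : X × X // p.1 ≠ p.2 ∧ dist p.1 p.2 < r₀} → ℝ :=
  fun p => min (ρ p.1.1) (ρ p.1.2) ^ (1 - δ + α) * |u p.1.1 - u p.1.2| / dist p.1.1 p.1.2 ^ α

/-- The weighted Hölder norm `‖u‖_{C^{0,α}_{δ-1}}`. -/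
noncomputable def weightedHolderNorm {X : Type*} [MetricSpace X]
    (ρ : X → ℝ) (r₀ α δ : ℝ) (u : X → ℝ) : ℝ :=
  (⨆ x : X, weightedSupTerm ρ δ u x) + (⨆ p, weightedHolderTerm ρ r₀ α δ u p)

/-- Product estimate in weighted Hölder norms (Lemma 6.2): for `δ < 1` and a weight
`ρ ≥ c·ε` one has `‖u v‖_{C^{0,α}_{δ-1}} ≤ C ε^{δ-1} ‖u‖_{C^{0,α}_{δ-1}} ‖v‖_{C^{0,α}_{δ-1}}`
with `C` depending only on `c` and `δ`. -/
theorem weighted_holder_product_estimate (c δ : ℝ) (hc : 0 < c) (hδ : δ < 1) :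
    ∃ C > (0 : ℝ),
      ∀ (X : Type) [MetricSpace X], ∀ (ρ : X → ℝ) (ε r₀ α : ℝ),
        0 < ε → 0 < r₀ → α ∈ Set.Ioo (0 : ℝ) 1 → (∀ x : X, c * ε ≤ ρ x) →
        ∀ u v : X → ℝ,
          BddAbove (Set.range (weightedSupTerm ρ δ u)) →
          BddAbove (Set.range (weightedHolderTerm ρ r₀ α δ u)) →
          BddAbove (Set.range (weightedSupTerm ρ δ v)) →
          BddAbove (Set.range (weightedHolderTerm ρ r₀ α δ v)) →
          weightedHolderNorm ρ r₀ α δ (u * v) ≤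
            C * ε ^ (δ - 1) *
              (weightedHolderNorm ρ r₀ α δ u * weightedHolderNorm ρ r₀ α δ v) := by
  refine ⟨c ^ (δ - 1), Real.rpow_pos_of_pos hc _, ?_⟩
  intro X _ ρ ε r₀ α hε hr₀ hα hρ u v hSu hHu hSv hHv
  have hcε : 0 < c * ε := mul_pos hc hε
  have hρpos : ∀ x, 0 < ρ x := fun x => hcε.trans_le (hρ x)
  have h1δ : 0 ≤ 1 - δ := by linarith
  have hδ1 : δ - 1 ≤ 0 := by linarith
  set Au := ⨆ x, weightedSupTerm ρ δ u x with hAudef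
  set Bu := ⨆ p, weightedHolderTerm ρ r₀ α δ u p with hBudef
  set Av := ⨆ x, weightedSupTerm ρ δ v x with hAvdef
  set Bv := ⨆ p, weightedHolderTerm ρ r₀ α δ v p with hBvdef
  have hSnn : ∀ (w : X → ℝ) x, 0 ≤ weightedSupTerm ρ δ w x := fun w x =>
    mul_nonneg (Real.rpow_nonneg (hρpos x).le _) (abs_nonneg _)
  have hHnn : ∀ (w : X → ℝ) p, 0 ≤ weightedHolderTerm ρ r₀ α δ w p := fun w p =>
    div_nonneg (mul_nonneg (Real.rpow_nonneg
      (le_min (hρpos _).le (hρpos _).le) _) (abs_nonneg _))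
      (Real.rpow_nonneg dist_nonneg _)
  have hAu0 : 0 ≤ Au := Real.iSup_nonneg (hSnn u)
  have hBu0 : 0 ≤ Bu := Real.iSup_nonneg (hHnn u)
  have hAv0 : 0 ≤ Av := Real.iSup_nonneg (hSnn v)
  have hBv0 : 0 ≤ Bv := Real.iSup_nonneg (hHnn v)
  have hK0 : 0 ≤ (c * ε) ^ (δ - 1) := Real.rpow_nonneg hcε.le _
  have hkey : ∀ {t : ℝ}, c * ε ≤ t → t ^ (δ - 1) ≤ (c * ε) ^ (δ - 1) :=
    fun {t} ht => Real.rpow_le_rpow_of_nonpos hcε ht hδ1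
  -- sup part
  have hS : (⨆ x, weightedSupTerm ρ δ (u * v) x) ≤ (c * ε) ^ (δ - 1) * (Au * Av) := by
    refine Real.iSup_le (fun x => ?_) (by positivity)
    have hρx := hρpos x
    have heq : weightedSupTerm ρ δ (u * v) x =
        ρ x ^ (δ - 1) * (weightedSupTerm ρ δ u x * weightedSupTerm ρ δ v x) := by
      simp only [weightedSupTerm, Pi.mul_apply, abs_mul]
      rw [show δ - 1 = -(1 - δ) by ring, Real.rpow_neg hρx.le]
      have hne : (ρ x ^ (1 - δ)) ≠ 0 := (Real.rpow_pos_of_pos hρx _).ne'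
      field_simp
    rw [heq]
    exact mul_le_mul (hkey (hρ x))
      (mul_le_mul (le_ciSup hSu x) (le_ciSup hSv x) (hSnn v x) hAu0)
      (mul_nonneg (hSnn u x) (hSnn v x)) hK0
  -- Hölder part
  have hH : (⨆ p, weightedHolderTerm ρ r₀ α δ (u * v) p) ≤
      (c * ε) ^ (δ - 1) * (Au * Bv + Av * Bu) := by
    refine Real.iSup_le (fun p => ?_) (by positivity)
    obtain ⟨⟨x, y⟩, hxy, hd⟩ := p
    set m := min (ρ x) (ρ y) with hm_def
    have hm : 0 < m := lt_min (hρpos x) (hρpos y)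
    have hmcε : c * ε ≤ m := le_min (hρ x) (hρ y)
    have hdpos : 0 < dist x y := dist_pos.2 hxy
    have hdα : 0 < dist x y ^ α := Real.rpow_pos_of_pos hdpos α
    have habs : |u x * v x - u y * v y| ≤ |u x| * |v x - v y| + |v y| * |u x - u y| :=
      calc |u x * v x - u y * v y| = |u x * (v x - v y) + v y * (u x - u y)| := by ring_nf
        _ ≤ |u x * (v x - v y)| + |v y * (u x - u y)| := abs_add_le _ _
        _ = |u x| * |v x - v y| + |v y| * |u x - u y| := by rw [abs_mul, abs_mul]
    have hpow : m ^ (1 - δ + α) = m ^ (δ - 1) * (m ^ (1 - δ) * m ^ (1 - δ + α)) := by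
      rw [← Real.rpow_add hm, ← Real.rpow_add hm]; ring_nf
    have hAux : m ^ (1 - δ) * |u x| ≤ Au := by
      refine le_trans ?_ (le_ciSup hSu x)
      exact mul_le_mul_of_nonneg_right
        (Real.rpow_le_rpow hm.le (min_le_left _ _) h1δ) (abs_nonneg _)
    have hAvy : m ^ (1 - δ) * |v y| ≤ Av := by
      refine le_trans ?_ (le_ciSup hSv y)
      exact mul_le_mul_of_nonneg_right
        (Real.rpow_le_rpow hm.le (min_le_right _ _) h1δ) (abs_nonneg _)
    have hBvp : m ^ (1 - δ + α) * |v x - v y| / dist x y ^ α ≤ Bv :=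
      le_ciSup hHv ⟨(x, y), hxy, hd⟩
    have hBup : m ^ (1 - δ + α) * |u x - u y| / dist x y ^ α ≤ Bu :=
      le_ciSup hHu ⟨(x, y), hxy, hd⟩
    have hstep : weightedHolderTerm ρ r₀ α δ (u * v) ⟨(x, y), hxy, hd⟩ ≤
        m ^ (δ - 1) * ((m ^ (1 - δ) * |u x|) *
            (m ^ (1 - δ + α) * |v x - v y| / dist x y ^ α)
          + (m ^ (1 - δ) * |v y|) *
            (m ^ (1 - δ + α) * |u x - u y| / dist x y ^ α)) := by
      show m ^ (1 - δ + α) * |u x * v x - u y * v y| / dist x y ^ α ≤ _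
      calc m ^ (1 - δ + α) * |u x * v x - u y * v y| / dist x y ^ α
          ≤ m ^ (1 - δ + α) * (|u x| * |v x - v y| + |v y| * |u x - u y|) /
              dist x y ^ α := by
            exact div_le_div_of_nonneg_right
              (mul_le_mul_of_nonneg_left habs (Real.rpow_nonneg hm.le _)) hdα.le
        _ = m ^ (δ - 1) * (m ^ (1 - δ) * m ^ (1 - δ + α)) *
              (|u x| * |v x - v y| + |v y| * |u x - u y|) / dist x y ^ α := by
            conv_lhs => rw [hpow]
        _ = m ^ (δ - 1) * ((m ^ (1 - δ) * |u x|) *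
              (m ^ (1 - δ + α) * |v x - v y| / dist x y ^ α)
            + (m ^ (1 - δ) * |v y|) *
              (m ^ (1 - δ + α) * |u x - u y| / dist x y ^ α)) := by
            field_simp
    refine hstep.trans ?_
    have h2 : (m ^ (1 - δ) * |u x|) * (m ^ (1 - δ + α) * |v x - v y| / dist x y ^ α)
          + (m ^ (1 - δ) * |v y|) * (m ^ (1 - δ + α) * |u x - u y| / dist x y ^ α)
        ≤ Au * Bv + Av * Bu := by
      have n1 : 0 ≤ m ^ (1 - δ) * |u x| :=
        mul_nonneg (Real.rpow_nonneg hm.le _) (abs_nonneg _)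
      have n2 : 0 ≤ m ^ (1 - δ) * |v y| :=
        mul_nonneg (Real.rpow_nonneg hm.le _) (abs_nonneg _)
      have n3 : 0 ≤ m ^ (1 - δ + α) * |v x - v y| / dist x y ^ α :=
        div_nonneg (mul_nonneg (Real.rpow_nonneg hm.le _) (abs_nonneg _)) hdα.le
      have n4 : 0 ≤ m ^ (1 - δ + α) * |u x - u y| / dist x y ^ α :=
        div_nonneg (mul_nonneg (Real.rpow_nonneg hm.le _) (abs_nonneg _)) hdα.le
      exact add_le_add (mul_le_mul hAux hBvp n3 hAu0) (mul_le_mul hAvy hBup n4 hAv0)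
    have hnn : 0 ≤ (m ^ (1 - δ) * |u x|) *
            (m ^ (1 - δ + α) * |v x - v y| / dist x y ^ α)
          + (m ^ (1 - δ) * |v y|) *
            (m ^ (1 - δ + α) * |u x - u y| / dist x y ^ α) := by positivity
    exact mul_le_mul (hkey hmcε) h2 hnn hK0
  have hmulK : (c * ε) ^ (δ - 1) = c ^ (δ - 1) * ε ^ (δ - 1) :=
    Real.mul_rpow hc.le hε.le
  simp only [weightedHolderNorm, ← hAudef, ← hBudef, ← hAvdef, ← hBvdef]
  rw [← hmulK]
  nlinarith [hS, hH, mul_nonneg hK0 (mul_nonneg hBu0 hBv0)]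
end
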